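/- arXiv:1610.09579 — 5 statements merged into one kernel-verified Lean document; each statement's English description precedes it below -/
import Mathlib

section
/- Let ε with 0 ≤ ε < π/12. In an ε-near-square quadrilateral, if one edge has length 1, then the length of any adjacent edge lies strictly between tan(π/4 − ε)·cos(2ε) and tan(π/4 + ε)/cos(2ε). -/
open Real EuclideanGeometry

/-- Four points of a convex quadrilateral: each vertex is outside the
convex hull of the other three. -/
def ConvexPosition (A B C D : EuclideanSpace ℝ (Fin 2)) : Prop :=
  A ∉ convexHull ℝ ({B, C, D} : Set (EuclideanSpace ℝ (Fin 2))) ∧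
  B ∉ convexHull ℝ ({A, C, D} : Set (EuclideanSpace ℝ (Fin 2))) ∧
  C ∉ convexHull ℝ ({A, B, D} : Set (EuclideanSpace ℝ (Fin 2))) ∧
  D ∉ convexHull ℝ ({A, B, C} : Set (EuclideanSpace ℝ (Fin 2)))

/-- A convex quadrilateral `ABCD` is `ε`-near-square if the four angles cut
off by the diagonal `AC` are all within `ε` of `π/4`. -/
def NearSquare (ε : ℝ) (A B C D : EuclideanSpace ℝ (Fin 2)) : Prop :=
  ConvexPosition A B C D ∧
  |∠ B A C - π / 4| < ε ∧ |∠ B C A - π / 4| < ε ∧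
  |∠ D A C - π / 4| < ε ∧ |∠ D C A - π / 4| < ε

/-!
By the sine rule in the triangles `ABC` and `ACD`, with `|AB| = 1` and `αᵢ` the four angles at
the diagonal, `|BC| = sin α₁ / sin α₂` and
`|AD| = (sin α₄ / sin α₂) · (sin (α₁ + α₂) / sin (α₃ + α₄))`.
Each `sin αᵢ` lies strictly between `sin (π/4 - ε)` and `cos (π/4 - ε)`, so a quotient of two of
them lies between `tan (π/4 - ε)` and its inverse `tan (π/4 + ε)`; each `sin (αᵢ + αⱼ)` lies in
`(cos 2ε, 1]`, so a quotient of two of them lies between `cos 2ε` and its inverse.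
-/

open Set

section Trigonometry

variable {ε a b : ℝ}

lemma div_mem_Ioo_of_mem_Ioc {s c x y : ℝ} (hs : 0 < s) (hx : x ∈ Ioc s c) (hy : y ∈ Ioc s c) :
    x / y ∈ Ioo (s / c) (c / s) := by
  obtain ⟨hsx, hxc⟩ := hx
  obtain ⟨hsy, hyc⟩ := hy
  have hc : 0 < c := by linarith
  have hy₀ : 0 < y := by linarith
  constructor
  · rw [div_lt_div_iff₀ hc hy₀]; nlinarith
  · rw [div_lt_div_iff₀ hy₀ hs]; nlinarith

lemma sin_mem_Ioo_of_abs_sub_pi_div_four_lt (hε : ε < π / 4) (ha : |a - π / 4| < ε) :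
    sin a ∈ Ioo (sin (π / 4 - ε)) (cos (π / 4 - ε)) := by
  obtain ⟨ha₁, ha₂⟩ := abs_lt.1 ha
  rw [← sin_pi_div_two_sub]
  exact ⟨sin_lt_sin_of_lt_of_le_pi_div_two (by linarith) (by linarith) (by linarith),
    sin_lt_sin_of_lt_of_le_pi_div_two (by linarith) (by linarith) (by linarith)⟩

lemma sin_pos_of_abs_sub_pi_div_four_lt (hε : ε < π / 4) (ha : |a - π / 4| < ε) : 0 < sin a :=
  (sin_pos_of_pos_of_lt_pi (by linarith) (by linarith [abs_nonneg (a - π / 4), pi_pos])).trans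
    (sin_mem_Ioo_of_abs_sub_pi_div_four_lt hε ha).1

lemma sin_div_sin_mem_Ioo (hε : ε < π / 4) (ha : |a - π / 4| < ε) (hb : |b - π / 4| < ε) :
    sin a / sin b ∈ Ioo (tan (π / 4 - ε)) (tan (π / 4 + ε)) := by
  have htan : tan (π / 4 + ε) = cos (π / 4 - ε) / sin (π / 4 - ε) := by
    rw [show π / 4 + ε = π / 2 - (π / 4 - ε) by ring, tan_pi_div_two_sub, tan_eq_sin_div_cos,
      inv_div]
  rw [htan, tan_eq_sin_div_cos]
  exact div_mem_Ioo_of_mem_Ioc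
    (sin_pos_of_pos_of_lt_pi (by linarith) (by linarith [abs_nonneg (a - π / 4), pi_pos]))
    (Ioo_subset_Ioc_self (sin_mem_Ioo_of_abs_sub_pi_div_four_lt hε ha))
    (Ioo_subset_Ioc_self (sin_mem_Ioo_of_abs_sub_pi_div_four_lt hε hb))

lemma cos_two_mul_pos (hε₀ : 0 ≤ ε) (hε : ε < π / 4) : 0 < cos (2 * ε) :=
  cos_pos_of_mem_Ioo ⟨by linarith [pi_pos], by linarith⟩

lemma cos_two_mul_lt_sin_add (hε : ε < π / 4) (ha : |a - π / 4| < ε) (hb : |b - π / 4| < ε) :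
    cos (2 * ε) < sin (a + b) := by
  rw [← cos_pi_div_two_sub, ← cos_abs (π / 2 - (a + b))]
  have h : |π / 2 - (a + b)| < 2 * ε := by
    rw [show π / 2 - (a + b) = -((a - π / 4) + (b - π / 4)) by ring, abs_neg]
    linarith [abs_add_le (a - π / 4) (b - π / 4)]
  exact cos_lt_cos_of_nonneg_of_le_pi (abs_nonneg _) (by linarith [pi_pos]) h

lemma sin_ratios_mem_Ioo {a₁ a₂ a₃ a₄ : ℝ} (hε : ε < π / 4) (h₁ : |a₁ - π / 4| < ε)
    (h₂ : |a₂ - π / 4| < ε) (h₃ : |a₃ - π / 4| < ε) (h₄ : |a₄ - π / 4| < ε) :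
    sin a₁ / sin a₂ ∈ Ioo (tan (π / 4 - ε) * cos (2 * ε)) (tan (π / 4 + ε) / cos (2 * ε)) ∧
    sin a₄ / sin a₂ * (sin (a₁ + a₂) / sin (a₃ + a₄)) ∈
      Ioo (tan (π / 4 - ε) * cos (2 * ε)) (tan (π / 4 + ε) / cos (2 * ε)) := by
  have hε₀ : 0 ≤ ε := (abs_nonneg _).trans h₁.le
  have hcos := cos_two_mul_pos hε₀ hε
  have htan : 0 < tan (π / 4 - ε) :=
    tan_pos_of_pos_of_lt_pi_div_two (by linarith) (by linarith [pi_pos])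
  obtain ⟨hlo₁₂, hhi₁₂⟩ := sin_div_sin_mem_Ioo hε h₁ h₂
  obtain ⟨hlo₄₂, hhi₄₂⟩ := sin_div_sin_mem_Ioo hε h₄ h₂
  obtain ⟨hlo, hhi⟩ := div_mem_Ioo_of_mem_Ioc hcos
    ⟨cos_two_mul_lt_sin_add hε h₁ h₂, sin_le_one _⟩ ⟨cos_two_mul_lt_sin_add hε h₃ h₄, sin_le_one _⟩
  rw [div_one] at hlo
  refine ⟨⟨?_, ?_⟩, ?_, ?_⟩
  · exact (mul_le_of_le_one_right htan.le (cos_le_one _)).trans_lt hlo₁₂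
  · exact hhi₁₂.trans_le (le_div_self (htan.trans hlo₁₂ |>.trans hhi₁₂).le hcos (cos_le_one _))
  · exact mul_lt_mul'' hlo₄₂ hlo htan.le hcos.le
  · calc sin a₄ / sin a₂ * (sin (a₁ + a₂) / sin (a₃ + a₄))
        < tan (π / 4 + ε) * (1 / cos (2 * ε)) :=
          mul_lt_mul'' hhi₄₂ hhi (htan.trans hlo₄₂).le (hcos.trans hlo).le
      _ = tan (π / 4 + ε) / cos (2 * ε) := mul_one_div _ _

end Trigonometry

section SineRule

variable {V P : Type*} [NormedAddCommGroup V] [InnerProductSpace ℝ V] [MetricSpace P]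
  [NormedAddTorsor V P]

lemma dist_eq_sin_angle_div_sin_angle_mul_dist {A B C : P} (h : sin (∠ B C A) ≠ 0) :
    dist B C = sin (∠ B A C) / sin (∠ B C A) * dist A B := by
  rw [div_mul_eq_mul_div, eq_div_iff h, mul_comm, angle_comm B C A, dist_comm B C,
    dist_comm A B, law_sin]

lemma sin_angle_eq_sin_add_angle {A B C : P} (h : B ≠ A) :
    sin (∠ A B C) = sin (∠ B A C + ∠ B C A) := by
  rw [← sin_pi_sub, ← angle_add_angle_add_angle_eq_pi C h, angle_comm C A B]
  congr 1; ring

lemma ne_of_abs_angle_sub_pi_div_four_lt {ε : ℝ} {A B C : P} (hε : ε ≤ π / 4)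
    (h : |∠ A B C - π / 4| < ε) : A ≠ B := by
  rintro rfl
  rw [angle_self_left, show π / 2 - π / 4 = π / 4 by ring, abs_of_pos (by positivity)] at h
  linarith

end SineRule

theorem stmt2_general (ε : ℝ) (hε : ε < π / 12)
    (A B C D : EuclideanSpace ℝ (Fin 2))
    (hns : NearSquare ε A B C D)
    (hAB : dist A B = 1) :
    (Real.tan (π / 4 - ε) * Real.cos (2 * ε) < dist B C ∧
      dist B C < Real.tan (π / 4 + ε) / Real.cos (2 * ε)) ∧
    (Real.tan (π / 4 - ε) * Real.cos (2 * ε) < dist A D ∧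
      dist A D < Real.tan (π / 4 + ε) / Real.cos (2 * ε)) := by
  obtain ⟨-, h₁, h₂, h₃, h₄⟩ := hns
  have hε' : ε < π / 4 := by linarith [pi_pos]
  have hsin₂ := (sin_pos_of_abs_sub_pi_div_four_lt hε' h₂).ne'
  have hsin₃₄ :=
    ((cos_two_mul_pos ((abs_nonneg _).trans h₁.le) hε').trans
      (cos_two_mul_lt_sin_add hε' h₃ h₄)).ne'
  have hBC : dist B C = sin (∠ B A C) / sin (∠ B C A) := by
    rw [dist_eq_sin_angle_div_sin_angle_mul_dist hsin₂, hAB, mul_one]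
  have hAC : dist A C = sin (∠ B A C + ∠ B C A) / sin (∠ B C A) := by
    rw [dist_eq_sin_angle_div_sin_angle_mul_dist (A := B) (by rw [angle_comm]; exact hsin₂),
      angle_comm A C B, sin_angle_eq_sin_add_angle (ne_of_abs_angle_sub_pi_div_four_lt hε'.le h₁),
      dist_comm, hAB, mul_one]
  have hAD : dist A D = sin (∠ D C A) / sin (∠ B C A) *
      (sin (∠ B A C + ∠ B C A) / sin (∠ D A C + ∠ D C A)) := by
    have hD := sin_angle_eq_sin_add_angle (C := C) (ne_of_abs_angle_sub_pi_div_four_lt hε'.le h₃)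
    rw [dist_eq_sin_angle_div_sin_angle_mul_dist (A := C) (B := A) (by rw [hD]; exact hsin₃₄),
      hD, angle_comm A C D, dist_comm C A, hAC]
    ring
  rw [hBC, hAD]
  exact sin_ratios_mem_Ioo hε' h₁ h₂ h₃ h₄

theorem stmt2 (ε : ℝ) (hε0 : 0 ≤ ε) (hε : ε < π / 12)
    (A B C D : EuclideanSpace ℝ (Fin 2))
    (hns : NearSquare ε A B C D)
    (hAB : dist A B = 1) :
    (Real.tan (π / 4 - ε) * Real.cos (2 * ε) < dist B C ∧
      dist B C < Real.tan (π / 4 + ε) / Real.cos (2 * ε)) ∧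
    (Real.tan (π / 4 - ε) * Real.cos (2 * ε) < dist A D ∧
      dist A D < Real.tan (π / 4 + ε) / Real.cos (2 * ε)) :=
  stmt2_general ε hε A B C D hns hAB
end

section
/- Let b₁, b₃, a₆, a₈, b₁' be five points in the plane such that the four segments b₁b₃, b₃a₆, a₆a₈, a₈b₁' all have the same length r > 0, with (interior) angles ∠b₁b₃a₆ = ∠a₆a₈b₁' = 2α and ∠b₃a₆a₈ = 2θ (turning consistently, forming a planar polygonal chain). Fix coordinates so that b₁ = (0,0) and b₁' lies on the positive x-axis. If π/4 < α < π/2 and π/4 < θ < π/2, then the y-coordinates satisfy y(a₆) > y(b₁), y(a₈) > y(b₃), y(a₆) > y(b₃), and y(a₈) > y(b₁). Moreover the angular slopes of the successive segments b₁b₃, b₃a₆, a₆a₈, a₈b₁' are α − θ, π − α − θ, θ − α, α + θ − π respectively (measured as angles with the x-axis). -/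
/-!
The four unit steps of the chain sum to
`e^{iφ} (1 - e^{-2iα}) (1 - e^{2iθ}) = 4 sin α sin θ · e^{i(φ - α + θ)}`.
Since `b₁'` lies on the positive real axis and `sin α, sin θ > 0`, this forces
`e^{iφ} = e^{i(α - θ)}`, which gives the four slopes. The heights then follow from
`sin (α - θ) + sin (α + θ) = 2 sin α cos θ` and `sin (α + θ) - sin (α - θ) = 2 cos α sin θ`,
both positive for acute `α, θ`.
-/

open Real Complex

/-- A zig-zag chain of four equal-length segments `b₁b₃, b₃a₆, a₆a₈, a₈b₁'`
(the unfolding of a quadrilateral's diagonal for the orbit `01203213`),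
with interior angles `2α` at `b₃` and `a₈` and `2θ` at `a₆`, turning
consistently.  The points are modelled as complex numbers and `φ` is the
direction of the first segment. -/
def OrbitAChain (b₁ b₃ a₆ a₈ b₁' : ℂ) (r α θ φ : ℝ) : Prop :=
  b₃ - b₁ = r * Complex.exp (φ * Complex.I) ∧
  a₆ - b₃ = r * Complex.exp ((φ + π - 2 * α) * Complex.I) ∧
  a₈ - a₆ = r * Complex.exp ((φ + 2 * θ - 2 * α) * Complex.I) ∧
  b₁' - a₈ = r * Complex.exp ((φ + 2 * θ - π) * Complex.I)

theorem Complex.exp_zigzag_sum_eq (φ a t : ℂ) :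
    exp (φ * I) + exp ((φ + π - 2 * a) * I) + exp ((φ + 2 * t - 2 * a) * I) +
        exp ((φ + 2 * t - π) * I) =
      4 * sin a * sin t * exp ((φ - a + t) * I) := by
  have hu := exp_ne_zero (a * I)
  have hv := exp_ne_zero (t * I)
  rw [show (φ + π - 2 * a) * I = φ * I + π * I - a * I - a * I by ring,
    show (φ + 2 * t - 2 * a) * I = φ * I + t * I + t * I - a * I - a * I by ring,
    show (φ + 2 * t - π) * I = φ * I + t * I + t * I - π * I by ring,
    show (φ - a + t) * I = φ * I - a * I + t * I by ring, sin, sin]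
  simp only [exp_add, exp_sub, neg_mul, exp_neg, exp_pi_mul_I]
  field_simp
  ring_nf
  simp only [I_sq]
  ring

theorem Complex.exp_mul_I_eq_one_of_ofReal_mul_pos {c ψ : ℝ} (hc : 0 < c)
    (him : ((c : ℂ) * exp (ψ * I)).im = 0) (hre : 0 < ((c : ℂ) * exp (ψ * I)).re) :
    exp (ψ * I) = 1 := by
  rw [re_ofReal_mul, exp_ofReal_mul_I_re] at hre
  rw [im_ofReal_mul, exp_ofReal_mul_I_im, mul_eq_zero] at him
  have hsin : Real.sin ψ = 0 := him.resolve_left hc.ne'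
  have hcos : Real.cos ψ = 1 := by
    nlinarith [Real.sin_sq_add_cos_sq ψ, pos_of_mul_pos_right hre hc.le]
  rw [exp_mul_I, ← ofReal_cos, ← ofReal_sin, hsin, hcos]
  simp

theorem Complex.im_sub_eq_of_sub_eq_mul_exp {z w : ℂ} {r x : ℝ}
    (h : z - w = r * exp (x * I)) : z.im - w.im = r * Real.sin x := by
  rw [← sub_im, h, im_ofReal_mul, exp_ofReal_mul_I_im]

namespace OrbitAChain

variable {b₁ b₃ a₆ a₈ b₁' : ℂ} {r α θ φ : ℝ}

theorem sub_eq (h : OrbitAChain b₁ b₃ a₆ a₈ b₁' r α θ φ) :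
    b₁' - b₁ = (4 * r * Real.sin α * Real.sin θ : ℝ) * cexp ((φ - α + θ : ℝ) * I) := by
  obtain ⟨h₁, h₂, h₃, h₄⟩ := h
  calc b₁' - b₁ = (b₃ - b₁) + (a₆ - b₃) + (a₈ - a₆) + (b₁' - a₈) := by ring
    _ = r * (cexp (φ * I) + cexp ((φ + π - 2 * α) * I) + cexp ((φ + 2 * θ - 2 * α) * I) +
          cexp ((φ + 2 * θ - π) * I)) := by rw [h₁, h₂, h₃, h₄]; ring
    _ = _ := by rw [exp_zigzag_sum_eq]; push_cast; ring

theorem of_exp_eq {φ' : ℝ} (h : OrbitAChain b₁ b₃ a₆ a₈ b₁' r α θ φ)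
    (hφ : cexp (φ * I) = cexp (φ' * I)) : OrbitAChain b₁ b₃ a₆ a₈ b₁' r α θ φ' := by
  have shift (c : ℂ) : cexp ((φ + c) * I) = cexp ((φ' + c) * I) := by
    rw [add_mul, add_mul, Complex.exp_add, Complex.exp_add, hφ]
  obtain ⟨h₁, h₂, h₃, h₄⟩ := h
  refine ⟨h₁.trans (by rw [hφ]), ?_, ?_, ?_⟩
  · rw [h₂, add_sub_assoc, shift, ← add_sub_assoc]
  · rw [h₃, add_sub_assoc, shift, ← add_sub_assoc]
  · rw [h₄, add_sub_assoc, shift, ← add_sub_assoc]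

theorem of_sub_pos_real (h : OrbitAChain b₁ b₃ a₆ a₈ b₁' r α θ φ) (hr : 0 < r)
    (hα : 0 < Real.sin α) (hθ : 0 < Real.sin θ) (him : (b₁' - b₁).im = 0)
    (hre : 0 < (b₁' - b₁).re) : OrbitAChain b₁ b₃ a₆ a₈ b₁' r α θ (α - θ) := by
  have hψ : cexp ((φ - α + θ : ℝ) * I) = 1 := by
    rw [h.sub_eq] at him hre
    exact exp_mul_I_eq_one_of_ofReal_mul_pos (mul_pos (mul_pos (by positivity) hα) hθ) him hre
  refine h.of_exp_eq ?_
  rw [← mul_one (cexp ((α - θ : ℝ) * I)), ← hψ, ← Complex.exp_add]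
  congr 1
  push_cast
  ring

end OrbitAChain

theorem stmt4 (b₁ b₃ a₆ a₈ b₁' : ℂ) (r α θ φ : ℝ) (hr : 0 < r)
    (hchain : OrbitAChain b₁ b₃ a₆ a₈ b₁' r α θ φ)
    (hb₁ : b₁ = 0) (him : b₁'.im = 0) (hre : 0 < b₁'.re)
    (hα : π / 4 < α ∧ α < π / 2) (hθ : π / 4 < θ ∧ θ < π / 2) :
    (a₆.im > b₁.im ∧ a₈.im > b₃.im ∧ a₆.im > b₃.im ∧ a₈.im > b₁.im) ∧
    (b₃ - b₁ = r * Complex.exp ((α - θ) * Complex.I) ∧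
     a₆ - b₃ = r * Complex.exp ((π - α - θ) * Complex.I) ∧
     a₈ - a₆ = r * Complex.exp ((θ - α) * Complex.I) ∧
     b₁' - a₈ = r * Complex.exp ((α + θ - π) * Complex.I)) := by
  have hsα : 0 < Real.sin α := Real.sin_pos_of_pos_of_lt_pi (by linarith) (by linarith)
  have hsθ : 0 < Real.sin θ := Real.sin_pos_of_pos_of_lt_pi (by linarith) (by linarith)
  have hcα : 0 < Real.cos α := Real.cos_pos_of_mem_Ioo ⟨by linarith, hα.2⟩
  have hcθ : 0 < Real.cos θ := Real.cos_pos_of_mem_Ioo ⟨by linarith, hθ.2⟩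
  obtain ⟨h₁, h₂, h₃, h₄⟩ := hchain.of_sub_pos_real hr hsα hsθ
    (by rwa [hb₁, sub_zero]) (by rwa [hb₁, sub_zero])
  have g₁ : b₃ - b₁ = r * cexp ((α - θ) * I) := h₁.trans (by push_cast; rfl)
  have g₂ : a₆ - b₃ = r * cexp ((π - α - θ) * I) := h₂.trans (by push_cast; ring_nf)
  have g₃ : a₈ - a₆ = r * cexp ((θ - α) * I) := h₃.trans (by push_cast; ring_nf)
  have g₄ : b₁' - a₈ = r * cexp ((α + θ - π) * I) := h₄.trans (by push_cast; ring_nf)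
  have i₁ := im_sub_eq_of_sub_eq_mul_exp (x := α - θ) (by push_cast; exact g₁)
  have i₂ := im_sub_eq_of_sub_eq_mul_exp (x := π - (α + θ)) (by push_cast; rw [g₂]; ring_nf)
  have i₃ := im_sub_eq_of_sub_eq_mul_exp (x := θ - α) (by push_cast; exact g₃)
  rw [Real.sin_sub] at i₁ i₃
  rw [Real.sin_pi_sub, Real.sin_add] at i₂
  have hαθ := mul_pos hr (mul_pos hsα hcθ)
  have hθα := mul_pos hr (mul_pos hcα hsθ)
  exact ⟨⟨by nlinarith, by nlinarith, by nlinarith, by nlinarith⟩, g₁, g₂, g₃, g₄⟩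
end

section
/- Let ε = π/56 and set x = π/2 − 2ε (so x < α < π/2 for α in the near-square range), and suppose β ≥ π/2. Define f(α, β) = cos α − cos(α + 2β) + cos(3α + 2β) − cos(3α + 4β). Then for all α ∈ (π/2 − 2ε, π/2) and β ∈ [π/2, 5π/8), f(α, β) ≤ cos(x) − cos(x + π) + cos(3x + π) − cos(3x + 2π), and this bound is strictly less than tan(π/4 − π/56)·cos(π/28). -/
/-!
Sum-to-product turns `f(α, β) = cos α - cos (α + 2β) + cos (3α + 2β) - cos (3α + 4β)` into
`8 sin β · g (sin (α + β))` with `g t = t (1 - t²)`. On the given ranges `0 ≤ sin β ≤ 1` and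
`sin (α + β) ≤ sin (π/28)`, where `g` is increasing, so `f(α, β) ≤ 8 g (sin (π/28)) = f(x, π/2)`.
Since `tan (π/4 - π/56) · cos (π/28) = 1 - sin (π/28)`, the strict bound reduces to
`8 s (1 + s) < 1` for `s = sin (π/28) < π/28`.
-/

open Real

theorem cos_sub_cos_add_cos_sub_cos (a b : ℝ) :
    cos a - cos (a + 2 * b) + cos (3 * a + 2 * b) - cos (3 * a + 4 * b) =
      8 * sin b * sin (a + b) * cos (a + b) ^ 2 := by
  have h₁ : cos a - cos (a + 2 * b) = 2 * sin (a + b) * sin b := by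
    rw [cos_sub_cos, show (a + (a + 2 * b)) / 2 = a + b by ring,
      show (a - (a + 2 * b)) / 2 = -b by ring, sin_neg]
    ring
  have h₂ : cos (3 * a + 2 * b) - cos (3 * a + 4 * b) = 2 * sin (3 * (a + b)) * sin b := by
    rw [cos_sub_cos, show (3 * a + 2 * b + (3 * a + 4 * b)) / 2 = 3 * (a + b) by ring,
      show (3 * a + 2 * b - (3 * a + 4 * b)) / 2 = -b by ring, sin_neg]
    ring
  linear_combination h₁ + h₂ + 2 * sin b * sin_three_mul (a + b) +
    -8 * sin b * sin (a + b) * sin_sq_add_cos_sq (a + b)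

theorem mul_one_sub_sq_le_mul_one_sub_sq {s t : ℝ} (hs : -1 ≤ s) (hst : s ≤ t) (ht : 0 ≤ t)
    (ht₃ : 3 * t ^ 2 ≤ 1) : s * (1 - s ^ 2) ≤ t * (1 - t ^ 2) := by
  have hfactor : 0 ≤ 1 - s ^ 2 - s * t - t ^ 2 := by
    nlinarith [mul_nonneg (neg_le_iff_add_nonneg'.1 hs) (sub_nonneg.2 hst)]
  nlinarith [mul_nonneg (sub_nonneg.2 hst) hfactor]

theorem sin_mul_sin_mul_cos_sq_le {b u v : ℝ} (hb : 0 ≤ sin b) (huv : sin u ≤ sin v)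
    (hv : 0 ≤ sin v) (hv₃ : 3 * sin v ^ 2 ≤ 1) :
    sin b * sin u * cos u ^ 2 ≤ sin v * cos v ^ 2 := by
  rw [cos_sq', cos_sq', mul_assoc]
  have hmono := mul_one_sub_sq_le_mul_one_sub_sq (neg_one_le_sin u) huv hv hv₃
  rcases le_total 0 (sin u * (1 - sin u ^ 2)) with hu | hu
  · exact (mul_le_of_le_one_left hu (sin_le_one b)).trans hmono
  · have hv₀ : 0 ≤ sin v * (1 - sin v ^ 2) := mul_nonneg hv (by nlinarith)
    exact (mul_nonpos_of_nonneg_of_nonpos hb hu).trans hv₀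

theorem tan_mul_sin_two_mul {x : ℝ} (hx : cos x ≠ 0) : tan x * sin (2 * x) = 1 - cos (2 * x) := by
  rw [sin_two_mul, cos_two_mul, cos_sq']
  linear_combination 2 * sin x * tan_mul_cos hx

theorem tan_pi_div_four_sub_mul_cos (θ : ℝ) (hθ : cos (π / 4 - θ / 2) ≠ 0) :
    tan (π / 4 - θ / 2) * cos θ = 1 - sin θ := by
  have h := tan_mul_sin_two_mul hθ
  rwa [show 2 * (π / 4 - θ / 2) = π / 2 - θ by ring, sin_pi_div_two_sub,
    cos_pi_div_two_sub] at h

theorem eight_mul_sin_mul_cos_sq_pi_div_28_lt :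
    8 * sin (π / 28) * cos (π / 28) ^ 2 < 1 - sin (π / 28) := by
  have hs₀ : 0 < sin (π / 28) := sin_pos_of_pos_of_lt_pi (by positivity) (by linarith [pi_pos])
  have hs₁ : sin (π / 28) < 0.1122 := (sin_lt (by positivity)).trans (by linarith [pi_lt_d6])
  rw [cos_sq']
  nlinarith [mul_pos (by linarith : 0 < 1 - sin (π / 28))
    (by nlinarith : 0 < 1 - 8 * sin (π / 28) * (1 + sin (π / 28)))]

theorem cos_sub_cos_add_cos_sub_cos_at_pi_div_two_sub_pi_div_28 :
    cos (π / 2 - 2 * (π / 56)) - cos (π / 2 - 2 * (π / 56) + π) +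
      cos (3 * (π / 2 - 2 * (π / 56)) + π) - cos (3 * (π / 2 - 2 * (π / 56)) + 2 * π) =
      8 * sin (π / 28) * cos (π / 28) ^ 2 := by
  have h := cos_sub_cos_add_cos_sub_cos (π / 2 - 2 * (π / 56)) (π / 2)
  rw [show π / 2 - 2 * (π / 56) + 2 * (π / 2) = π / 2 - 2 * (π / 56) + π by ring,
    show 3 * (π / 2 - 2 * (π / 56)) + 2 * (π / 2) = 3 * (π / 2 - 2 * (π / 56)) + π by ring,
    show 3 * (π / 2 - 2 * (π / 56)) + 4 * (π / 2) = 3 * (π / 2 - 2 * (π / 56)) + 2 * π by ring,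
    show π / 2 - 2 * (π / 56) + π / 2 = π - π / 28 by ring,
    sin_pi_div_two, sin_pi_sub, cos_pi_sub, neg_sq] at h
  linear_combination h

theorem stmt10 (α β : ℝ)
    (hα : π / 2 - 2 * (π / 56) < α ∧ α < π / 2)
    (hβ : π / 2 ≤ β ∧ β < 5 * π / 8) :
    (Real.cos α - Real.cos (α + 2 * β) + Real.cos (3 * α + 2 * β) -
        Real.cos (3 * α + 4 * β)) ≤
      (Real.cos (π / 2 - 2 * (π / 56)) - Real.cos (π / 2 - 2 * (π / 56) + π) +
        Real.cos (3 * (π / 2 - 2 * (π / 56)) + π) -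
        Real.cos (3 * (π / 2 - 2 * (π / 56)) + 2 * π)) ∧
    (Real.cos (π / 2 - 2 * (π / 56)) - Real.cos (π / 2 - 2 * (π / 56) + π) +
        Real.cos (3 * (π / 2 - 2 * (π / 56)) + π) -
        Real.cos (3 * (π / 2 - 2 * (π / 56)) + 2 * π)) <
      Real.tan (π / 4 - π / 56) * Real.cos (π / 28) := by
  have hπ := pi_pos
  have hsin : sin (α + β) ≤ sin (π / 28) := by
    rw [← cos_sub_pi_div_two, ← cos_pi_div_two_sub]
    exact cos_le_cos_of_nonneg_of_le_pi (by linarith) (by linarith) (by linarith)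
  have htan : tan (π / 4 - π / 56) * cos (π / 28) = 1 - sin (π / 28) := by
    rw [show π / 4 - π / 56 = π / 4 - π / 28 / 2 by ring]
    exact tan_pi_div_four_sub_mul_cos _ (cos_pos_of_mem_Ioo ⟨by linarith, by linarith⟩).ne'
  refine ⟨?_, ?_⟩
  · have hsinβ : 0 ≤ sin β := sin_nonneg_of_nonneg_of_le_pi (by linarith) (by linarith)
    have hsin₀ : 0 ≤ sin (π / 28) := sin_nonneg_of_nonneg_of_le_pi (by positivity) (by linarith)
    have hsin₃ : 3 * sin (π / 28) ^ 2 ≤ 1 := by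
      nlinarith [sin_lt (x := π / 28) (by positivity), pi_lt_four]
    rw [cos_sub_cos_add_cos_sub_cos, cos_sub_cos_add_cos_sub_cos_at_pi_div_two_sub_pi_div_28]
    linarith [sin_mul_sin_mul_cos_sq_le hsinβ hsin hsin₀ hsin₃]
  · rw [cos_sub_cos_add_cos_sub_cos_at_pi_div_two_sub_pi_div_28, htan]
    exact eight_mul_sin_mul_cos_sq_pi_div_28_lt
end

section
/- For every integer n ≥ 2, the word Wₙ = 0(13)ⁿ0(13)^{n−1}131(31)^{n−1}0(31)ⁿ03 over the alphabet {0,1,3} satisfies: for each letter in {0,1,3}, the number of occurrences in odd positions equals the number of occurrences in even positions. (Positions are indexed starting from 1; (13)ⁿ denotes n-fold concatenation of the block 13.) -/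
/-- Number of occurrences of the letter `l` in odd positions (1-indexed)
of the word `w`, i.e. at even 0-based indices. -/
def countOddPos (w : List ℕ) (l : ℕ) : ℕ :=
  ((w.zipIdx.map Prod.swap).filter (fun p => p.1 % 2 = 0 ∧ p.2 = l)).length

/-- Number of occurrences of the letter `l` in even positions (1-indexed)
of the word `w`, i.e. at odd 0-based indices. -/
def countEvenPos (w : List ℕ) (l : ℕ) : ℕ :=
  ((w.zipIdx.map Prod.swap).filter (fun p => p.1 % 2 = 1 ∧ p.2 = l)).length

/-- The orbit type `Wₙ = 0(13)ⁿ0(13)^{n-1}131(31)^{n-1}0(31)ⁿ03` of the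
`Xₙ` family of periodic billiard paths. -/
def Xword (n : ℕ) : List ℕ :=
  [0] ++ (List.replicate n [1, 3]).flatten ++ [0] ++
    (List.replicate (n - 1) [1, 3]).flatten ++ [1, 3, 1] ++
    (List.replicate (n - 1) [3, 1]).flatten ++ [0] ++
    (List.replicate n [3, 1]).flatten ++ [0, 3]

/-!
The difference between the odd-position and even-position counts of a letter `a` in a word `w`
is the alternating sum `∑_{wᵢ = a} (-1)ⁱ`, which is additive over concatenations with a prefix
of even length. Each block `(13)ᵏ` or `(31)ᵏ` thus contributes `k` times the value of its single
block, the odd-length pieces `0` and `131` between blocks flip the sign of what follows, and for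
`Wₙ` the resulting contributions cancel letter by letter.
-/

section SignedCount

variable {α : Type*} [DecidableEq α]

/-- The alternating sum `∑_{wᵢ = a} (-1)ⁱ` over the 0-based positions `i` of `w`. -/
def signedCount (a : α) : List α → ℤ
  | [] => 0
  | x :: w => (if x = a then 1 else 0) - signedCount a w

@[simp]
theorem signedCount_nil (a : α) : signedCount a [] = 0 := rfl

@[simp]
theorem signedCount_cons (a x : α) (w : List α) :
    signedCount a (x :: w) = (if x = a then 1 else 0) - signedCount a w := rfl

theorem signedCount_append (a : α) (u v : List α) :
    signedCount a (u ++ v) = signedCount a u + (-1) ^ u.length * signedCount a v := by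
  induction u with
  | nil => simp
  | cons x u ih => simp only [List.cons_append, signedCount_cons, ih, List.length_cons]; ring

theorem signedCount_append_of_even {u : List α} (hu : Even u.length) (a : α) (v : List α) :
    signedCount a (u ++ v) = signedCount a u + signedCount a v := by
  rw [signedCount_append, hu.neg_one_pow, one_mul]

theorem signedCount_flatten_replicate_append {u : List α} (hu : Even u.length) (a : α) (m : ℕ)
    (v : List α) :
    signedCount a ((List.replicate m u).flatten ++ v) = m * signedCount a u + signedCount a v := by
  induction m with
  | zero => simp
  | succ m ih =>
    rw [List.replicate_succ, List.flatten_cons, List.append_assoc, signedCount_append_of_even hu, ih]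
    push_cast; ring

theorem length_filter_zipIdx_even_sub_odd (w : List α) (a : α) (k : ℕ) :
    ((((w.zipIdx k).map Prod.swap).filter (fun p => p.1 % 2 = 0 ∧ p.2 = a)).length : ℤ) -
      (((w.zipIdx k).map Prod.swap).filter (fun p => p.1 % 2 = 1 ∧ p.2 = a)).length =
      (-1) ^ k * signedCount a w := by
  induction w generalizing k with
  | nil => simp
  | cons x w ih =>
    have hw := ih (k + 1)
    rw [pow_succ] at hw
    simp only [List.zipIdx_cons, List.map_cons, Prod.swap_prod_mk, List.filter_cons,
      signedCount_cons]
    rcases Nat.even_or_odd k with hk | hk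
    · have hk2 : k % 2 = 0 := Nat.even_iff.mp hk
      rw [hk.neg_one_pow] at hw ⊢
      by_cases hx : x = a <;> simp [hk2, hx] at hw ⊢ <;> linarith
    · have hk2 : k % 2 = 1 := Nat.odd_iff.mp hk
      rw [hk.neg_one_pow] at hw ⊢
      by_cases hx : x = a <;> simp [hk2, hx] at hw ⊢ <;> linarith

end SignedCount

theorem countOddPos_sub_countEvenPos (w : List ℕ) (l : ℕ) :
    (countOddPos w l : ℤ) - countEvenPos w l = signedCount l w := by
  simpa [countOddPos, countEvenPos] using length_filter_zipIdx_even_sub_odd w l 0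

theorem stmt12 (n : ℕ) (hn : 2 ≤ n) (l : ℕ) :
    countOddPos (Xword n) l = countEvenPos (Xword n) l := by
  suffices signedCount l (Xword n) = 0 by
    have := countOddPos_sub_countEvenPos (Xword n) l
    omega
  obtain ⟨m, rfl⟩ : ∃ m, n = m + 1 := ⟨n - 1, by omega⟩
  have h13 : Even [1, 3].length := even_two
  have h31 : Even [3, 1].length := even_two
  simp only [Xword, List.append_assoc, List.cons_append, List.nil_append, Nat.add_sub_cancel,
    signedCount_nil, signedCount_cons, signedCount_flatten_replicate_append h13,
    signedCount_flatten_replicate_append h31]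
  split_ifs <;> omega
end

section
/- Let ABC be an acute triangle and let X, Y, Z be the feet of the altitudes from A, B, C respectively (X on BC, Y on CA, Z on AB). Then the closed polygonal path X → Y → Z → X satisfies the billiard reflection law at each of X, Y, Z; that is, the angle between XY and line BC equals the angle between XZ and line BC, and similarly at Y and Z. -/
open Real EuclideanGeometry
open scoped RealInnerProductSpace

/-!
Since `∠AXB = ∠AYB = π / 2`, the points `A, B, X, Y` lie on the circle with diameter `AB`, so
`CX · CB = CY · CA = ⟪CA, CB⟫` (the power of `C`). Thus `X` and `Y` are the images of `B` and `A`
under the inversion at `C` with that power, which makes triangle `CXY` similar to triangle `CAB`;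
hence `∠CXY = ∠CAB`, and in the same way `∠BXZ = ∠BAC`. In an acute triangle `X` lies strictly
between `B` and `C`, so both `∠YXB` and `∠ZXC` are `π - ∠BAC`.
-/

namespace InnerProductGeometry

variable {V : Type*} [NormedAddCommGroup V] [InnerProductSpace ℝ V]

theorem inner_pos_of_angle_lt_pi_div_two {x y : V} (h : angle x y < π / 2) : 0 < ⟪x, y⟫ := by
  rw [angle, Real.arccos_lt_pi_div_two] at h
  by_contra! hxy
  exact h.not_ge (div_nonpos_of_nonpos_of_nonneg hxy (by positivity))

end InnerProductGeometry

namespace EuclideanGeometry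

variable {V P : Type*} [NormedAddCommGroup V] [InnerProductSpace ℝ V] [MetricSpace P]
  [NormedAddTorsor V P] {a b c x y z : P}

theorem inner_pos_of_angle_lt_pi_div_two (h : ∠ a b c < π / 2) : 0 < ⟪a -ᵥ b, c -ᵥ b⟫ :=
  InnerProductGeometry.inner_pos_of_angle_lt_pi_div_two h

theorem angle_center_inversion_inversion {R : ℝ} (hx : x ≠ c) (hy : y ≠ c) (hR : R ≠ 0) :
    ∠ c (inversion c R x) (inversion c R y) = ∠ c y x := by
  refine Similar.angle_eq (similar_of_dist_mul_eq_dist_mul_eq (a' := c) ?_ ?_ ?_ ?_)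
  · simp [hx, hR]
  · simpa using hy.symm
  · rw [dist_comm c, dist_inversion_center, dist_inversion_inversion hx hy, dist_comm y c,
      dist_comm y x]
    field [dist_ne_zero.2 hx, dist_ne_zero.2 hy.symm]
  · rw [dist_comm c, dist_inversion_center, dist_inversion_center, dist_comm c y]
    field [dist_ne_zero.2 hx, dist_ne_zero.2 hy]

def IsAltitudeFoot (a b c x : P) : Prop :=
  x ∈ line[ℝ, b, c] ∧ ⟪a -ᵥ x, c -ᵥ b⟫ = 0

theorem IsAltitudeFoot.symm (h : IsAltitudeFoot a b c x) : IsAltitudeFoot a c b x := by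
  refine ⟨Set.pair_comm b c ▸ h.1, ?_⟩
  rw [← neg_vsub_eq_vsub_rev c b, inner_neg_right, h.2, neg_zero]

theorem IsAltitudeFoot.eq_lineMap (h : IsAltitudeFoot a b c x) :
    x = AffineMap.lineMap c b (⟪a -ᵥ c, b -ᵥ c⟫ / dist b c ^ 2) := by
  obtain ⟨t, rfl⟩ := mem_affineSpan_pair_iff_exists_lineMap_eq.1 h.symm.1
  rcases eq_or_ne b c with rfl | hbc
  · simp
  have hperp := h.symm.2
  rw [AffineMap.lineMap_apply, vsub_vadd_eq_vsub_sub, inner_sub_left, real_inner_smul_left,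
    real_inner_self_eq_norm_sq, ← dist_eq_norm_vsub, sub_eq_zero] at hperp
  rw [hperp]
  congr 1
  field [dist_ne_zero.2 hbc]

theorem IsAltitudeFoot.eq_inversion (h : IsAltitudeFoot a b c x) (hp : 0 ≤ ⟪a -ᵥ c, b -ᵥ c⟫) :
    x = inversion c √⟪a -ᵥ c, b -ᵥ c⟫ b := by
  rw [h.eq_lineMap, inversion_eq_lineMap, div_pow, sq_sqrt hp]

theorem IsAltitudeFoot.sbtw (h : IsAltitudeFoot a b c x) (hb : ∠ a b c < π / 2)
    (hc : ∠ a c b < π / 2) : Sbtw ℝ b x c := by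
  have hbc : b ≠ c := by rintro rfl; simp at hb
  have hinner : ⟪a -ᵥ c, b -ᵥ c⟫ = dist b c ^ 2 - ⟪a -ᵥ b, c -ᵥ b⟫ := by
    rw [← vsub_add_vsub_cancel a b c, inner_add_left, ← neg_vsub_eq_vsub_rev b c, inner_neg_right,
      real_inner_self_eq_norm_sq, dist_eq_norm_vsub V]
    ring
  have hd := pow_pos (dist_pos.2 hbc) 2
  rw [h.eq_lineMap]
  refine (sbtw_lineMap_iff.2 ⟨hbc.symm, div_pos (inner_pos_of_angle_lt_pi_div_two hc) hd, ?_⟩).symm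
  rw [div_lt_one hd, hinner]
  linarith [inner_pos_of_angle_lt_pi_div_two hb]

theorem IsAltitudeFoot.angle_foot_foot_eq (hx : IsAltitudeFoot a b c x)
    (hy : IsAltitudeFoot b c a y) (hc : ∠ a c b < π / 2) : ∠ c x y = ∠ c a b := by
  have hp := inner_pos_of_angle_lt_pi_div_two hc
  have hac : a ≠ c := by rintro rfl; simp at hc
  have hbc : b ≠ c := by rintro rfl; simp at hc
  rw [hx.eq_inversion hp.le, hy.symm.eq_inversion (by rw [real_inner_comm]; exact hp.le),
    real_inner_comm (a -ᵥ c)]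
  exact angle_center_inversion_inversion hbc hac (sqrt_ne_zero'.2 hp)

theorem IsAltitudeFoot.angle_eq_angle_of_isAltitudeFoot (hx : IsAltitudeFoot a b c x)
    (hy : IsAltitudeFoot b c a y) (hz : IsAltitudeFoot c a b z) (hb : ∠ a b c < π / 2)
    (hc : ∠ a c b < π / 2) : ∠ y x b = ∠ z x c := by
  have hbxc := (hx.sbtw hb hc).angle₁₂₃_eq_pi
  have hy_supp := angle_add_angle_eq_pi_of_angle_eq_pi y hbxc
  have hz_supp := angle_add_angle_eq_pi_of_angle_eq_pi z hbxc
  have hxy := hx.angle_foot_foot_eq hy hc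
  have hxz := hx.symm.angle_foot_foot_eq hz.symm hb
  rw [angle_comm c x y] at hxy
  rw [angle_comm b x z, angle_comm b a c] at hxz
  linarith

end EuclideanGeometry

theorem stmt14_general (A B C X Y Z : EuclideanSpace ℝ (Fin 2))
    (hacuteA : ∠ B A C < π / 2) (hacuteB : ∠ A B C < π / 2)
    (hacuteC : ∠ A C B < π / 2)
    -- `X` is the foot of the altitude from `A` on `BC`
    (hX : X ∈ affineSpan ℝ ({B, C} : Set (EuclideanSpace ℝ (Fin 2))))
    (hXperp : ⟪A - X, C - B⟫ = (0 : ℝ))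
    -- `Y` is the foot of the altitude from `B` on `CA`
    (hY : Y ∈ affineSpan ℝ ({C, A} : Set (EuclideanSpace ℝ (Fin 2))))
    (hYperp : ⟪B - Y, A - C⟫ = (0 : ℝ))
    -- `Z` is the foot of the altitude from `C` on `AB`
    (hZ : Z ∈ affineSpan ℝ ({A, B} : Set (EuclideanSpace ℝ (Fin 2))))
    (hZperp : ⟪C - Z, B - A⟫ = (0 : ℝ)) :
    ∠ Y X B = ∠ Z X C ∧ ∠ Z Y C = ∠ X Y A ∧ ∠ X Z A = ∠ Y Z B := by
  have hXfoot : IsAltitudeFoot A B C X := ⟨hX, hXperp⟩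
  have hYfoot : IsAltitudeFoot B C A Y := ⟨hY, hYperp⟩
  have hZfoot : IsAltitudeFoot C A B Z := ⟨hZ, hZperp⟩
  refine ⟨hXfoot.angle_eq_angle_of_isAltitudeFoot hYfoot hZfoot hacuteB hacuteC,
    hYfoot.angle_eq_angle_of_isAltitudeFoot hZfoot hXfoot ?_ hacuteA,
    hZfoot.angle_eq_angle_of_isAltitudeFoot hXfoot hYfoot ?_ ?_⟩ <;> rwa [angle_comm]

theorem stmt14 (A B C X Y Z : EuclideanSpace ℝ (Fin 2))
    (hncol : ¬ Collinear ℝ ({A, B, C} : Set (EuclideanSpace ℝ (Fin 2))))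
    (hacuteA : ∠ B A C < π / 2) (hacuteB : ∠ A B C < π / 2)
    (hacuteC : ∠ A C B < π / 2)
    -- `X` is the foot of the altitude from `A` on `BC`
    (hX : X ∈ affineSpan ℝ ({B, C} : Set (EuclideanSpace ℝ (Fin 2))))
    (hXperp : ⟪A - X, C - B⟫ = (0 : ℝ))
    -- `Y` is the foot of the altitude from `B` on `CA`
    (hY : Y ∈ affineSpan ℝ ({C, A} : Set (EuclideanSpace ℝ (Fin 2))))
    (hYperp : ⟪B - Y, A - C⟫ = (0 : ℝ))
    -- `Z` is the foot of the altitude from `C` on `AB`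
    (hZ : Z ∈ affineSpan ℝ ({A, B} : Set (EuclideanSpace ℝ (Fin 2))))
    (hZperp : ⟪C - Z, B - A⟫ = (0 : ℝ)) :
    ∠ Y X B = ∠ Z X C ∧ ∠ Z Y C = ∠ X Y A ∧ ∠ X Z A = ∠ Y Z B :=
  stmt14_general A B C X Y Z hacuteA hacuteB hacuteC hX hXperp hY hYperp hZ hZperp
end
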